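/- arXiv:1210.8419 — 3 statements merged into one kernel-verified Lean document; each statement's English description precedes it below -/
import Mathlib

section
/- Let A and B be 4×4 real matrices of the normal form A = rows (1,0,1,a₁₄), (0,1,1,a₂₄), (0,0,1,a₃₄), (0,0,0,1) and B = rows (1,0,0,0), (b₂₁,1,0,0), (b₃₁,1,1,0), (1,1,0,1) with a₁₄, a₂₄, a₃₄, b₂₁, b₃₁ ∈ ℝ, and suppose both A and B are SO(3,1)-parabolic. If A·W = W·B where W = B·A⁻¹·B⁻¹·A, then there exists t ∈ ℝ, t ≠ 2, with (a₁₄, a₂₄, a₃₄, b₂₁, b₃₁) = ((3−t)/(t−2), 1/(t−2), t/(2(t−2)), t, 2). -/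
open Matrix
noncomputable section

/-- The standard `SO(3,1)`-parabolic: unipotent with Jordan blocks of sizes 3 and 1. -/
def so31ParabolicModel : Matrix (Fin 4) (Fin 4) ℝ :=
  !![1, 0, 0, 0;
     0, 1, 1, 0;
     0, 0, 1, 1;
     0, 0, 0, 1]

/-- A matrix is `SO(3,1)`-parabolic if it is conjugate in `GL(4,ℝ)` to the unipotent
matrix with Jordan blocks of sizes 3 and 1. -/
def IsSO31Parabolic (M : Matrix (Fin 4) (Fin 4) ℝ) : Prop :=
  ∃ P : GL (Fin 4) ℝ, M = (P : Matrix (Fin 4) (Fin 4) ℝ) * so31ParabolicModel *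
    ((P⁻¹ : GL (Fin 4) ℝ) : Matrix (Fin 4) (Fin 4) ℝ)

/-- Normal form of the first meridian. -/
def nfA (a₁₄ a₂₄ a₃₄ : ℝ) : Matrix (Fin 4) (Fin 4) ℝ :=
  !![1, 0, 1, a₁₄;
     0, 1, 1, a₂₄;
     0, 0, 1, a₃₄;
     0, 0, 0, 1]

/-- Normal form of the second meridian. -/
def nfB (b₂₁ b₃₁ : ℝ) : Matrix (Fin 4) (Fin 4) ℝ :=
  !![1, 0, 0, 0;
     b₂₁, 1, 0, 0;
     b₃₁, 1, 1, 0;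
     1, 1, 0, 1]

/-! Being unipotent with a Jordan block of size 3, an `SO(3,1)`-parabolic `M` has
`(M - 1)² ≠ 0`; for the two normal forms this says `a₃₄ ≠ 0` and `b₂₁ ≠ 0`. The normal forms
have explicit inverses, so `A W = W B` becomes a polynomial system. In four of its entries the
factors `a₃₄` and `b₂₁` can be cancelled, leaving `b₃₁ = 2`, `a₁₄ = a₃₄ - 3/2`,
`a₂₄ = a₃₄ - 1/2` and `2 a₃₄ (b₂₁ - 2) = b₂₁`; the family is this solution with `t = b₂₁`. -/

theorem Units.conj_sub_one_pow_eq_zero_iff {R : Type*} [Ring R] (u : Rˣ) (x : R) (n : ℕ) :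
    ((u : R) * x * ↑u⁻¹ - 1) ^ n = 0 ↔ (x - 1) ^ n = 0 := by
  have h : (u : R) * x * ↑u⁻¹ - 1 = u * (x - 1) * ↑u⁻¹ := by
    rw [mul_sub, sub_mul, mul_one, Units.mul_inv]
  rw [h, Units.conj_pow, Units.mul_left_eq_zero, Units.mul_right_eq_zero]

theorem IsSO31Parabolic.sub_one_sq_ne_zero {M : Matrix (Fin 4) (Fin 4) ℝ}
    (h : IsSO31Parabolic M) : (M - 1) ^ 2 ≠ 0 := by
  obtain ⟨P, rfl⟩ := h
  rw [Ne, Units.conj_sub_one_pow_eq_zero_iff]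
  intro h0
  simpa [so31ParabolicModel, sq, mul_apply, Fin.sum_univ_four, one_apply] using
    congrFun (congrFun h0 1) 3

theorem nfA_sub_one_sq_eq_zero_iff (a₁₄ a₂₄ a₃₄ : ℝ) :
    (nfA a₁₄ a₂₄ a₃₄ - 1) ^ 2 = 0 ↔ a₃₄ = 0 := by
  refine ⟨fun h => ?_, ?_⟩
  · simpa [nfA, sq, mul_apply, Fin.sum_univ_four, one_apply] using congrFun (congrFun h 0) 3
  · rintro rfl
    ext i j
    fin_cases i <;> fin_cases j <;> simp [nfA, sq, mul_apply, Fin.sum_univ_four, one_apply]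

theorem nfB_sub_one_sq_eq_zero_iff (b₂₁ b₃₁ : ℝ) :
    (nfB b₂₁ b₃₁ - 1) ^ 2 = 0 ↔ b₂₁ = 0 := by
  refine ⟨fun h => ?_, ?_⟩
  · simpa [nfB, sq, mul_apply, Fin.sum_univ_four, one_apply] using congrFun (congrFun h 2) 0
  · rintro rfl
    ext i j
    fin_cases i <;> fin_cases j <;> simp [nfB, sq, mul_apply, Fin.sum_univ_four, one_apply]

theorem IsSO31Parabolic.nfA_ne_zero {a₁₄ a₂₄ a₃₄ : ℝ} (h : IsSO31Parabolic (nfA a₁₄ a₂₄ a₃₄)) :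
    a₃₄ ≠ 0 :=
  mt (nfA_sub_one_sq_eq_zero_iff a₁₄ a₂₄ a₃₄).2 h.sub_one_sq_ne_zero

theorem IsSO31Parabolic.nfB_ne_zero {b₂₁ b₃₁ : ℝ} (h : IsSO31Parabolic (nfB b₂₁ b₃₁)) :
    b₂₁ ≠ 0 :=
  mt (nfB_sub_one_sq_eq_zero_iff b₂₁ b₃₁).2 h.sub_one_sq_ne_zero

theorem nfA_inv (a₁₄ a₂₄ a₃₄ : ℝ) :
    (nfA a₁₄ a₂₄ a₃₄)⁻¹ =
      !![1, 0, -1, a₃₄ - a₁₄; 0, 1, -1, a₃₄ - a₂₄; 0, 0, 1, -a₃₄; 0, 0, 0, 1] := by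
  refine inv_eq_right_inv ?_
  ext i j
  fin_cases i <;> fin_cases j <;> simp [nfA, mul_apply, Fin.sum_univ_four, one_apply] <;> ring

theorem nfB_inv (b₂₁ b₃₁ : ℝ) :
    (nfB b₂₁ b₃₁)⁻¹ =
      !![1, 0, 0, 0; -b₂₁, 1, 0, 0; b₂₁ - b₃₁, -1, 1, 0; b₂₁ - 1, -1, 0, 1] := by
  refine inv_eq_right_inv ?_
  ext i j
  fin_cases i <;> fin_cases j <;> simp [nfB, mul_apply, Fin.sum_univ_four, one_apply] <;> ring

theorem fig8_relation_nfA_nfB {a₁₄ a₂₄ a₃₄ b₂₁ b₃₁ : ℝ} (ha₃₄ : a₃₄ ≠ 0) (hb₂₁ : b₂₁ ≠ 0)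
    (hrel : nfA a₁₄ a₂₄ a₃₄ *
        (nfB b₂₁ b₃₁ * (nfA a₁₄ a₂₄ a₃₄)⁻¹ * (nfB b₂₁ b₃₁)⁻¹ * nfA a₁₄ a₂₄ a₃₄) =
      (nfB b₂₁ b₃₁ * (nfA a₁₄ a₂₄ a₃₄)⁻¹ * (nfB b₂₁ b₃₁)⁻¹ * nfA a₁₄ a₂₄ a₃₄) *
        nfB b₂₁ b₃₁) :
    b₃₁ = 2 ∧ a₁₄ = a₃₄ - 3 / 2 ∧ a₂₄ = a₃₄ - 1 / 2 ∧ 2 * a₃₄ * (b₂₁ - 2) = b₂₁ := by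
  rw [nfA_inv, nfB_inv] at hrel
  have h01 := congrFun (congrFun hrel 0) 1
  have h22 := congrFun (congrFun hrel 2) 2
  have h30 := congrFun (congrFun hrel 3) 0
  have h31 := congrFun (congrFun hrel 3) 1
  simp only [mul_apply, Fin.sum_univ_four, nfA, nfB, of_apply, cons_val, cons_val_zero,
    cons_val_one] at h01 h22 h30 h31
  have he : 2 * (b₃₁ - b₂₁) + (2 - b₂₁) * (a₁₄ + a₂₄ - 2 * a₃₄) = 0 := by
    refine (mul_eq_zero.1 ?_).resolve_left ha₃₄
    linear_combination h22
  have hs : a₁₄ + a₂₄ - 2 * a₃₄ + 2 = 0 := by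
    refine (mul_eq_zero.1 ?_).resolve_left hb₂₁
    linear_combination (1 - b₃₁) * he - h30 + h31
  have ha : 2 * a₁₄ - 2 * a₃₄ + 3 = 0 := by
    linear_combination (-1 - a₁₄) * he + (1 - a₂₄ + a₁₄) * hs - h31
  refine ⟨by linear_combination (1 / 2) * he - ((2 - b₂₁) / 2) * hs, by linear_combination ha / 2,
    by linear_combination hs - ha / 2, ?_⟩
  linear_combination -4 * h01 - 2 * a₃₄ * he + (8 * a₃₄ - 2 * a₃₄ * b₂₁) * hs
    + (b₂₁ - 4 * a₃₄ + 2 * a₁₄ * b₂₁) * ha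

/-- **Figure-eight knot: the solution variety.**  If `A`, `B` are `SO(3,1)`-parabolic
matrices in the normal form above satisfying the figure-eight relation `A·W = W·B` with
`W = B A⁻¹ B⁻¹ A`, then the parameters lie on the one-parameter family of the paper. -/
theorem fig8_parabolic_solutions (a₁₄ a₂₄ a₃₄ b₂₁ b₃₁ : ℝ)
    (hA : IsSO31Parabolic (nfA a₁₄ a₂₄ a₃₄))
    (hB : IsSO31Parabolic (nfB b₂₁ b₃₁))
    (hrel : nfA a₁₄ a₂₄ a₃₄ *
        (nfB b₂₁ b₃₁ * (nfA a₁₄ a₂₄ a₃₄)⁻¹ * (nfB b₂₁ b₃₁)⁻¹ * nfA a₁₄ a₂₄ a₃₄) =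
      (nfB b₂₁ b₃₁ * (nfA a₁₄ a₂₄ a₃₄)⁻¹ * (nfB b₂₁ b₃₁)⁻¹ * nfA a₁₄ a₂₄ a₃₄) *
        nfB b₂₁ b₃₁) :
    ∃ t : ℝ, t ≠ 2 ∧ a₁₄ = (3 - t)/(t - 2) ∧ a₂₄ = 1/(t - 2) ∧
      a₃₄ = t/(2*(t - 2)) ∧ b₂₁ = t ∧ b₃₁ = 2 := by
  obtain ⟨hb₃₁, ha₁₄, ha₂₄, ha₃₄⟩ := fig8_relation_nfA_nfB hA.nfA_ne_zero hB.nfB_ne_zero hrel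
  have ht : b₂₁ - 2 ≠ 0 := fun h => hB.nfB_ne_zero (by rw [← ha₃₄, h, mul_zero])
  refine ⟨b₂₁, sub_ne_zero.1 ht, ?_, ?_, ?_, rfl, hb₃₁⟩
  · rw [eq_div_iff ht]
    linear_combination (b₂₁ - 2) * ha₁₄ + ha₃₄ / 2
  · rw [eq_div_iff ht]
    linear_combination (b₂₁ - 2) * ha₂₄ + ha₃₄ / 2
  · rw [eq_div_iff (mul_ne_zero two_ne_zero ht)]
    linear_combination ha₃₄

end
end

section
/- Let b₂₁, b₃₂ ∈ ℝ and set d = b₂₁ − 4b₃₂². Consider the symmetric 4×4 real matrix X with rows (1, −1, 2b₃₂, −b₂₁/2), (−1, 1, −2b₃₂, 2b₃₂²), (2b₃₂, −2b₃₂, b₂₁, −b₂₁b₃₂), (−b₂₁/2, 2b₃₂², −b₂₁b₃₂, b₂₁b₃₂²). If d > 0, then the quadratic form on ℝ⁴ defined by X has signature (3,1), i.e., X has exactly three positive eigenvalues and one negative eigenvalue. Moreover, if d > 0 and Ψ : ℝ⁴ → Herm₂ is the linear map sending (x,y,z,t) to the Hermitian matrix with diagonal entries x and d·t and off-diagonal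 entry (x − y + 2b₃₂z − 2b₃₂²t) + i(√d·z − b₃₂√d·t) (upper right; lower left its conjugate), then Ψ is a linear isomorphism and −det(Ψ(v)) = vᵀXv for all v ∈ ℝ⁴. -/
/-!
`Ψ` has an explicit inverse on `Herm₂`: read `x` and `t` off the diagonal, then `z` and `y` off
the imaginary and real parts of the upper-right entry (this needs `d > 0`). Expanding
`−det Ψ(v) = |Ψ₀₁|² − Ψ₀₀ Ψ₁₁` gives `vᵀ X v`.

For the signature: `det X = −d³/4 < 0`, so `X` has a negative eigenvalue. On the hyperplane
`x = −d t` the form is `(x − y + 2b₃₂z − 2b₃₂²t)² + d (z − b₃₂t)² + d²t²`, positive definite; two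
orthonormal eigenvectors with nonpositive eigenvalues would span a plane meeting this hyperplane
in a nonzero vector, so every other eigenvalue is positive.
-/

open Matrix
noncomputable section

/-- The symmetric matrix `X` of the quadratic form `−det` transported to `ℝ⁴`. -/
def Xform (b₂₁ b₃₂ : ℝ) : Matrix (Fin 4) (Fin 4) ℝ :=
  !![1, -1, 2*b₃₂, -b₂₁/2;
     -1, 1, -2*b₃₂, 2*b₃₂^2;
     2*b₃₂, -2*b₃₂, b₂₁, -b₂₁*b₃₂;
     -b₂₁/2, 2*b₃₂^2, -b₂₁*b₃₂, b₂₁*b₃₂^2]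

/-- The linear isomorphism `Ψ : ℝ⁴ → Herm₂` of the paper: `(x,y,z,t)` goes to the
Hermitian matrix with diagonal entries `x`, `d·t` and upper-right entry
`(x − y + 2b₃₂z − 2b₃₂²t) + i(√d·z − b₃₂√d·t)`, where `d = b₂₁ − 4b₃₂²`. -/
def PsiHerm (b₂₁ b₃₂ : ℝ) (v : Fin 4 → ℝ) : Matrix (Fin 2) (Fin 2) ℂ :=
  !![(v 0 : ℂ),
     ((v 0 - v 1 + 2*b₃₂*(v 2) - 2*b₃₂^2*(v 3) : ℝ) : ℂ) +
       ((Real.sqrt (b₂₁ - 4*b₃₂^2) * v 2 - b₃₂ * Real.sqrt (b₂₁ - 4*b₃₂^2) * v 3 : ℝ) : ℂ) *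
         Complex.I;
     ((v 0 - v 1 + 2*b₃₂*(v 2) - 2*b₃₂^2*(v 3) : ℝ) : ℂ) -
       ((Real.sqrt (b₂₁ - 4*b₃₂^2) * v 2 - b₃₂ * Real.sqrt (b₂₁ - 4*b₃₂^2) * v 3 : ℝ) : ℂ) *
         Complex.I,
     (((b₂₁ - 4*b₃₂^2) * v 3 : ℝ) : ℂ)]

lemma exists_ne_zero_mul_add_mul_eq_zero (x y : ℝ) :
    ∃ a b : ℝ, (a ≠ 0 ∨ b ≠ 0) ∧ a * x + b * y = 0 := by
  by_cases hy : y = 0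
  · exact ⟨0, 1, Or.inr one_ne_zero, by simp [hy]⟩
  · exact ⟨y, -x, Or.inl hy, by ring⟩

namespace Matrix.IsHermitian

variable {n : Type*} [Fintype n] [DecidableEq n] {A : Matrix n n ℝ}

lemma eigenvectorBasis_dotProduct (hA : A.IsHermitian) (i j : n) :
    ⇑(hA.eigenvectorBasis i) ⬝ᵥ ⇑(hA.eigenvectorBasis j) = if i = j then 1 else 0 := by
  have horth := orthonormal_iff_ite.mp hA.eigenvectorBasis.orthonormal i j
  simpa [PiLp.inner_apply, dotProduct, mul_comm] using horth

lemma dotProduct_mulVec_eigenvector_pair (hA : A.IsHermitian) {k l : n} (hkl : k ≠ l) (a b : ℝ) :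
    (a • ⇑(hA.eigenvectorBasis k) + b • ⇑(hA.eigenvectorBasis l)) ⬝ᵥ
      (A *ᵥ (a • ⇑(hA.eigenvectorBasis k) + b • ⇑(hA.eigenvectorBasis l)))
    = a ^ 2 * hA.eigenvalues k + b ^ 2 * hA.eigenvalues l := by
  simp only [mulVec_add, mulVec_smul, hA.mulVec_eigenvectorBasis, dotProduct_add, add_dotProduct,
    dotProduct_smul, smul_dotProduct, smul_eq_mul, hA.eigenvectorBasis_dotProduct, hkl, hkl.symm,
    if_true, if_false]
  ring

lemma subsingleton_eigenvalues_nonpos (hA : A.IsHermitian) (w : n → ℝ)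
    (hpos : ∀ v, v ≠ 0 → w ⬝ᵥ v = 0 → 0 < v ⬝ᵥ (A *ᵥ v)) :
    {i | hA.eigenvalues i ≤ 0}.Subsingleton := by
  intro k hk l hl
  by_contra hkl
  set u := fun i => ⇑(hA.eigenvectorBasis i)
  obtain ⟨a, b, hab, horth⟩ := exists_ne_zero_mul_add_mul_eq_zero (w ⬝ᵥ u k) (w ⬝ᵥ u l)
  have hne : a • u k + b • u l ≠ 0 := by
    intro h0
    have hk0 := congrArg (u k ⬝ᵥ ·) h0
    have hl0 := congrArg (u l ⬝ᵥ ·) h0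
    simp only [u, dotProduct_add, dotProduct_smul, smul_eq_mul, hA.eigenvectorBasis_dotProduct,
      hkl, Ne.symm hkl, if_true, if_false, dotProduct_zero] at hk0 hl0
    rcases hab with ha | hb
    · exact ha (by linarith)
    · exact hb (by linarith)
  have := hpos _ hne (by simpa [dotProduct_add, dotProduct_smul] using horth)
  rw [hA.dotProduct_mulVec_eigenvector_pair hkl] at this
  have hk' : hA.eigenvalues k ≤ 0 := hk
  have hl' : hA.eigenvalues l ≤ 0 := hl
  linarith [mul_nonpos_of_nonneg_of_nonpos (sq_nonneg a) hk',
    mul_nonpos_of_nonneg_of_nonpos (sq_nonneg b) hl']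

lemma card_filter_roots_charpoly (hA : A.IsHermitian) (p : ℝ → Prop) [DecidablePred p] :
    (A.charpoly.roots.filter p).card = (Finset.univ.filter fun i => p (hA.eigenvalues i)).card := by
  rw [hA.roots_charpoly_eq_eigenvalues, Multiset.filter_map, Multiset.card_map]
  rfl

theorem card_roots_charpoly_pos_neg_of_det_neg (hA : A.IsHermitian) (hdet : A.det < 0) (w : n → ℝ)
    (hpos : ∀ v, v ≠ 0 → w ⬝ᵥ v = 0 → 0 < v ⬝ᵥ (A *ᵥ v)) :
    (A.charpoly.roots.filter fun μ => 0 < μ).card = Fintype.card n - 1 ∧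
      (A.charpoly.roots.filter fun μ => μ < 0).card = 1 := by
  have hsub := hA.subsingleton_eigenvalues_nonpos w hpos
  obtain ⟨k, hk⟩ : ∃ k, hA.eigenvalues k < 0 := by
    by_contra! h
    have := Finset.prod_nonneg fun i (_ : i ∈ Finset.univ) => h i
    rw [hA.det_eq_prod_eigenvalues] at hdet
    simp only [RCLike.ofReal_real_eq_id, id] at hdet
    linarith
  have hneg : (Finset.univ.filter fun i => hA.eigenvalues i < 0) = {k} := by
    ext i
    simp only [Finset.mem_filter, Finset.mem_univ, true_and, Finset.mem_singleton]
    exact ⟨fun hi => hsub hi.le hk.le, by rintro rfl; exact hk⟩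
  have hpos' : (Finset.univ.filter fun i => 0 < hA.eigenvalues i) = {k}ᶜ := by
    ext i
    simp only [Finset.mem_filter, Finset.mem_univ, true_and, Finset.mem_compl,
      Finset.mem_singleton]
    exact ⟨by rintro hi rfl; linarith, fun hi => lt_of_not_ge fun h => hi (hsub h hk.le)⟩
  rw [hA.card_filter_roots_charpoly, hA.card_filter_roots_charpoly, hneg, hpos',
    Finset.card_compl, Finset.card_singleton]
  exact ⟨rfl, rfl⟩

end Matrix.IsHermitian

lemma isHermitian_Xform (b₂₁ b₃₂ : ℝ) : (Xform b₂₁ b₃₂).IsHermitian := by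
  ext i j
  fin_cases i <;> fin_cases j <;> simp [Xform]

lemma det_Xform (b₂₁ b₃₂ : ℝ) : (Xform b₂₁ b₃₂).det = -(b₂₁ - 4 * b₃₂ ^ 2) ^ 3 / 4 := by
  simp [Xform, det_succ_row_zero, Fin.sum_univ_succ, Fin.succAbove]
  ring

/-- The shape of `|Ψ₀₁ v|² − Ψ₀₀ v · Ψ₁₁ v`, with `d = b₂₁ − 4b₃₂²` left unexpanded. -/
lemma dotProduct_mulVec_Xform (b₂₁ b₃₂ : ℝ) (v : Fin 4 → ℝ) :
    v ⬝ᵥ (Xform b₂₁ b₃₂ *ᵥ v) =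
      (v 0 - v 1 + 2 * b₃₂ * v 2 - 2 * b₃₂ ^ 2 * v 3) ^ 2
        + (b₂₁ - 4 * b₃₂ ^ 2) * (v 2 - b₃₂ * v 3) ^ 2 - v 0 * ((b₂₁ - 4 * b₃₂ ^ 2) * v 3) := by
  simp [Xform, mulVec, dotProduct, Fin.sum_univ_four]
  ring

lemma dotProduct_mulVec_Xform_pos {b₂₁ b₃₂ : ℝ} (hd : 0 < b₂₁ - 4 * b₃₂ ^ 2) (v : Fin 4 → ℝ)
    (hv : v ≠ 0) (hw : ![1, 0, 0, b₂₁ - 4 * b₃₂ ^ 2] ⬝ᵥ v = 0) :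
    0 < v ⬝ᵥ (Xform b₂₁ b₃₂ *ᵥ v) := by
  have hx : v 0 = -((b₂₁ - 4 * b₃₂ ^ 2) * v 3) := by
    simp [dotProduct, Fin.sum_univ_four] at hw
    linarith
  rw [dotProduct_mulVec_Xform, hx]
  by_contra! hle
  have hp := sq_nonneg (-((b₂₁ - 4 * b₃₂ ^ 2) * v 3) - v 1 + 2 * b₃₂ * v 2 - 2 * b₃₂ ^ 2 * v 3)
  have hq := mul_nonneg hd.le (sq_nonneg (v 2 - b₃₂ * v 3))
  have hr := sq_nonneg ((b₂₁ - 4 * b₃₂ ^ 2) * v 3)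
  have ht : v 3 = 0 := by
    have : ((b₂₁ - 4 * b₃₂ ^ 2) * v 3) ^ 2 = 0 := by linarith
    simpa [hd.ne'] using this
  have hz : v 2 = 0 := by
    have : (b₂₁ - 4 * b₃₂ ^ 2) * (v 2 - b₃₂ * v 3) ^ 2 = 0 := by linarith
    simpa [hd.ne', ht] using this
  have hy : v 1 = 0 := by
    have : (-((b₂₁ - 4 * b₃₂ ^ 2) * v 3) - v 1 + 2 * b₃₂ * v 2 - 2 * b₃₂ ^ 2 * v 3) ^ 2 = 0 := by
      linarith
    simpa [ht, hz] using this
  apply hv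
  ext i
  fin_cases i <;> simp [hx, hy, hz, ht]

lemma isLinearMap_PsiHerm (b₂₁ b₃₂ : ℝ) : IsLinearMap ℝ (PsiHerm b₂₁ b₃₂) where
  map_add v w := by
    ext i j
    fin_cases i <;> fin_cases j <;> simp [PsiHerm] <;> ring
  map_smul a v := by
    ext i j
    fin_cases i <;> fin_cases j <;> simp [PsiHerm] <;> ring

lemma PsiHerm_eq_re_im (b₂₁ b₃₂ : ℝ) (v : Fin 4 → ℝ) :
    PsiHerm b₂₁ b₃₂ v =
      !![⟨v 0, 0⟩, ⟨v 0 - v 1 + 2 * b₃₂ * v 2 - 2 * b₃₂ ^ 2 * v 3,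
          √(b₂₁ - 4 * b₃₂ ^ 2) * (v 2 - b₃₂ * v 3)⟩;
        ⟨v 0 - v 1 + 2 * b₃₂ * v 2 - 2 * b₃₂ ^ 2 * v 3,
          -(√(b₂₁ - 4 * b₃₂ ^ 2) * (v 2 - b₃₂ * v 3))⟩, ⟨(b₂₁ - 4 * b₃₂ ^ 2) * v 3, 0⟩] := by
  ext i j
  fin_cases i <;> fin_cases j <;>
    simp [PsiHerm, Complex.ext_iff, -Complex.ofReal_pow, -Complex.ofReal_mul] <;> ring

lemma conjTranspose_PsiHerm (b₂₁ b₃₂ : ℝ) (v : Fin 4 → ℝ) :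
    (PsiHerm b₂₁ b₃₂ v)ᴴ = PsiHerm b₂₁ b₃₂ v := by
  rw [PsiHerm_eq_re_im]
  ext i j
  fin_cases i <;> fin_cases j <;> simp [Complex.ext_iff]

def psiInv (b₂₁ b₃₂ : ℝ) (N : Matrix (Fin 2) (Fin 2) ℂ) : Fin 4 → ℝ :=
  ![(N 0 0).re,
    (N 0 0).re + 2 * b₃₂ * ((N 0 1).im / √(b₂₁ - 4 * b₃₂ ^ 2)) - (N 0 1).re,
    (N 0 1).im / √(b₂₁ - 4 * b₃₂ ^ 2) + b₃₂ * ((N 1 1).re / (b₂₁ - 4 * b₃₂ ^ 2)),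
    (N 1 1).re / (b₂₁ - 4 * b₃₂ ^ 2)]

lemma psiInv_PsiHerm {b₂₁ b₃₂ : ℝ} (hd : 0 < b₂₁ - 4 * b₃₂ ^ 2) (v : Fin 4 → ℝ) :
    psiInv b₂₁ b₃₂ (PsiHerm b₂₁ b₃₂ v) = v := by
  have hs : √(b₂₁ - 4 * b₃₂ ^ 2) ≠ 0 := (Real.sqrt_pos.mpr hd).ne'
  rw [PsiHerm_eq_re_im]
  ext i
  fin_cases i <;> simp [psiInv, mul_div_cancel_left₀ _ hs, hd.ne']
  ring

lemma PsiHerm_psiInv {b₂₁ b₃₂ : ℝ} (hd : 0 < b₂₁ - 4 * b₃₂ ^ 2) {N : Matrix (Fin 2) (Fin 2) ℂ}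
    (hN : Nᴴ = N) : PsiHerm b₂₁ b₃₂ (psiInv b₂₁ b₃₂ N) = N := by
  have hs : √(b₂₁ - 4 * b₃₂ ^ 2) ≠ 0 := (Real.sqrt_pos.mpr hd).ne'
  have hdiag (i : Fin 2) : (N i i).im = 0 := by
    have := congrArg (·.im) (congrFun (congrFun hN i) i)
    simp at this
    linarith
  have h10 : N 1 0 = star (N 0 1) := by simpa using (congrFun (congrFun hN 1) 0).symm
  rw [PsiHerm_eq_re_im]
  ext i j
  fin_cases i <;> fin_cases j <;>
    simp [psiInv, Complex.ext_iff, h10, hdiag, mul_div_cancel₀ _ hs, mul_div_cancel₀ _ hd.ne'] <;>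
    ring

lemma neg_det_PsiHerm {b₂₁ b₃₂ : ℝ} (hd : 0 ≤ b₂₁ - 4 * b₃₂ ^ 2) (v : Fin 4 → ℝ) :
    -(PsiHerm b₂₁ b₃₂ v).det = ((v ⬝ᵥ (Xform b₂₁ b₃₂ *ᵥ v) : ℝ) : ℂ) := by
  have hsq : √(b₂₁ - 4 * b₃₂ ^ 2) ^ 2 = b₂₁ - 4 * b₃₂ ^ 2 := Real.sq_sqrt hd
  rw [dotProduct_mulVec_Xform, PsiHerm_eq_re_im, det_fin_two_of, Complex.ext_iff]
  simp only [Complex.mul_re, Complex.mul_im, Complex.sub_re, Complex.sub_im, Complex.neg_re,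
    Complex.neg_im, Complex.ofReal_re, Complex.ofReal_im]
  constructor
  · linear_combination (v 2 - b₃₂ * v 3) ^ 2 * hsq
  · ring

/-- **The form `X` has signature `(3,1)` and is the transport of `−det` under `Ψ`.**
If `d = b₂₁ − 4b₃₂² > 0` then `X` has exactly three positive eigenvalues and one negative
eigenvalue, `Ψ` is a linear isomorphism from `ℝ⁴` onto `Herm₂`, and
`−det(Ψ v) = vᵀ X v` for all `v ∈ ℝ⁴`. -/
theorem signature_and_transport (b₂₁ b₃₂ : ℝ) (hd : 0 < b₂₁ - 4*b₃₂^2) :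
    (((Xform b₂₁ b₃₂).charpoly.roots.filter (fun μ : ℝ => 0 < μ)).card = 3 ∧
     ((Xform b₂₁ b₃₂).charpoly.roots.filter (fun μ : ℝ => μ < 0)).card = 1) ∧
    IsLinearMap ℝ (PsiHerm b₂₁ b₃₂) ∧
    Function.Injective (PsiHerm b₂₁ b₃₂) ∧
    (∀ N : Matrix (Fin 2) (Fin 2) ℂ, Nᴴ = N → ∃ v : Fin 4 → ℝ, PsiHerm b₂₁ b₃₂ v = N) ∧
    (∀ v : Fin 4 → ℝ, (PsiHerm b₂₁ b₃₂ v)ᴴ = PsiHerm b₂₁ b₃₂ v) ∧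
    (∀ v : Fin 4 → ℝ,
      -(PsiHerm b₂₁ b₃₂ v).det = ((v ⬝ᵥ (Xform b₂₁ b₃₂ *ᵥ v) : ℝ) : ℂ)) := by
  have hdet : (Xform b₂₁ b₃₂).det < 0 := by
    rw [det_Xform]
    linarith [pow_pos hd 3]
  refine ⟨?_, isLinearMap_PsiHerm b₂₁ b₃₂,
    Function.LeftInverse.injective (g := psiInv b₂₁ b₃₂) (psiInv_PsiHerm hd),
    fun N hN => ⟨psiInv b₂₁ b₃₂ N, PsiHerm_psiInv hd hN⟩,
    conjTranspose_PsiHerm b₂₁ b₃₂, neg_det_PsiHerm hd.le⟩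
  exact (isHermitian_Xform b₂₁ b₃₂).card_roots_charpoly_pos_neg_of_det_neg hdet _
    (dotProduct_mulVec_Xform_pos hd)

end
end

section
/- Let E, F ∈ ℂ∖{0} and τ ∈ ℂ, and suppose the matrices m = [[E, 1],[0, E⁻¹]] and l = [[F, τ],[0, F⁻¹]] in SL₂(ℂ) commute. Then τ·(E − E⁻¹) = F − F⁻¹ (equivalently, τ·sinh(a/2) = sinh(b/2) when E = e^{a/2} and F = e^{b/2}), and consequently τ²·(tr(m)² − 4) + 4 = tr(l)². In particular, if τ is purely imaginary and nonzero and tr(m)² is a real number in the interval [0,4), then tr(l)² is a real number greater than 4. -/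
open Matrix

theorem Matrix.commute_upperTriangular_fin_two_iff {R : Type*} [CommRing R] (a b d a' b' d' : R) :
    Commute !![a, b; 0, d] !![a', b'; 0, d'] ↔ b' * (a - d) = b * (a' - d') := by
  rw [Commute, SemiconjBy, mul_fin_two, mul_fin_two, ← Matrix.ext_iff]
  simp only [Fin.forall_fin_two, of_apply, cons_val', cons_val_zero, cons_val_one,
    empty_val', cons_val_fin_one, mul_zero, zero_mul, add_zero, zero_add]
  constructor
  · rintro ⟨⟨-, h⟩, -⟩
    linear_combination h
  · intro h
    exact ⟨⟨mul_comm a a', by linear_combination h⟩, trivial, mul_comm d d'⟩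

theorem add_inv_sq_sub_four {K : Type*} [Field K] {x : K} (hx : x ≠ 0) :
    (x + x⁻¹) ^ 2 - 4 = (x - x⁻¹) ^ 2 := by
  linear_combination 4 * mul_inv_cancel₀ hx

theorem Complex.im_eq_zero_and_four_lt_re_of_re_eq_zero {τ w : ℂ} (hτ : τ.re = 0) (hτ0 : τ ≠ 0)
    (hw : w.im = 0) (hw4 : w.re < 4) :
    (τ ^ 2 * (w - 4) + 4).im = 0 ∧ 4 < (τ ^ 2 * (w - 4) + 4).re := by
  have hτim : τ.im ≠ 0 := fun h => hτ0 (Complex.ext hτ h)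
  simp only [pow_two, add_re, add_im, mul_re, mul_im, sub_re, sub_im, hτ, hw]
  norm_num
  exact mul_neg_of_pos_of_neg (mul_self_pos.mpr hτim) (sub_neg.mpr hw4)

/-- **The τ-invariant relation for commuting upper-triangular matrices.**
If `m = [[E,1],[0,E⁻¹]]` and `l = [[F,τ],[0,F⁻¹]]` in `SL₂(ℂ)` commute then
`τ(E − E⁻¹) = F − F⁻¹` and `τ²(tr(m)² − 4) + 4 = tr(l)²`; in particular if `τ` is purely
imaginary and nonzero and `tr(m)²` is a real number in `[0, 4)`, then `tr(l)²` is a real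
number greater than `4`. -/
theorem tau_invariant_relation (E F τ : ℂ) (hE : E ≠ 0) (hF : F ≠ 0)
    (hcomm : (!![E, 1; 0, E⁻¹] : Matrix (Fin 2) (Fin 2) ℂ) * !![F, τ; 0, F⁻¹] =
      !![F, τ; 0, F⁻¹] * !![E, 1; 0, E⁻¹]) :
    τ * (E - E⁻¹) = F - F⁻¹ ∧
    τ^2 * ((E + E⁻¹)^2 - 4) + 4 = (F + F⁻¹)^2 ∧
    (τ.re = 0 → τ ≠ 0 → ((E + E⁻¹)^2).im = 0 → 0 ≤ ((E + E⁻¹)^2).re →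
      ((E + E⁻¹)^2).re < 4 →
      ((F + F⁻¹)^2).im = 0 ∧ 4 < ((F + F⁻¹)^2).re) := by
  have hsinh : τ * (E - E⁻¹) = F - F⁻¹ := by
    simpa using (commute_upperTriangular_fin_two_iff E 1 E⁻¹ F τ F⁻¹).mp hcomm
  have htrace : τ ^ 2 * ((E + E⁻¹) ^ 2 - 4) + 4 = (F + F⁻¹) ^ 2 := by
    rw [add_inv_sq_sub_four hE, ← mul_pow, hsinh, ← add_inv_sq_sub_four hF, sub_add_cancel]
  refine ⟨hsinh, htrace, fun hτ hτ0 him _ hlt => ?_⟩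
  rw [← htrace]
  exact Complex.im_eq_zero_and_four_lt_re_of_re_eq_zero hτ hτ0 him hlt
end
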